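/- For α > 0 and n ≥ 2, define m_{n−i} = 2α²·(n+i−1)!(n−i−1)!/((n−1)!)² for i = 1,…,n−1 and m_n = α². Then the vector u with u_j = √(m_j) satisfies B(n)u = (m_1^{−1/2}k_1, 0, …, 0)ᵀ, where k_1 = α²(2n−1)!/((n−1)!)² and B(n) is the symmetric tridiagonal matrix with diagonal entries n, superdiagonal −(1/2)√(i(2n−i−1)) for i=1,…,n−2, and −√(n(n−1)/2) in position (n−1,n). -/

import Mathlib

/-- The 1-indexed off-diagonal entries of the matrix `A(n)`. -/
noncomputable def offA (n k : ℕ) : ℝ :=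
  if k = n - 1 then Real.sqrt (n * (n - 1) / 2)
  else (1 / 2) * Real.sqrt (k * (2 * n - k - 1))

/-- The matrix `A(n)`: symmetric tridiagonal, diagonal `n-1`,
super/sub-diagonal `offA n k` at (1-indexed) position `(k, k+1)`. -/
noncomputable def Amat (n : ℕ) : Matrix (Fin n) (Fin n) ℝ :=
  Matrix.of fun i j =>
    if (i : ℕ) = (j : ℕ) then (n : ℝ) - 1
    else if (i : ℕ) + 1 = (j : ℕ) then offA n ((i : ℕ) + 1)
    else if (j : ℕ) + 1 = (i : ℕ) then offA n ((j : ℕ) + 1)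
    else 0

/-- The matrix `B(n) = A(n) + I` with negative off-diagonal signs: diagonal `n`,
off-diagonal `-offA n k` at (1-indexed) position `(k, k+1)`. -/
noncomputable def Bmat (n : ℕ) : Matrix (Fin n) (Fin n) ℝ :=
  Matrix.of fun i j =>
    if (i : ℕ) = (j : ℕ) then (n : ℝ)
    else if (i : ℕ) + 1 = (j : ℕ) then -offA n ((i : ℕ) + 1)
    else if (j : ℕ) + 1 = (i : ℕ) then -offA n ((j : ℕ) + 1)
    else 0

/-- The masses: `m_j = 2α² (2n-j-1)! (j-1)! / ((n-1)!)²` for `1 ≤ j ≤ n-1`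
(i.e. `m_{n-i} = 2α² (n+i-1)! (n-i-1)! / ((n-1)!)²` for `i ≥ 1`) and `m_n = α²`. -/
noncomputable def massVal (n j : ℕ) (α : ℝ) : ℝ :=
  if j = n then α ^ 2
  else 2 * α ^ 2 * (Nat.factorial (2 * n - j - 1)) * (Nat.factorial (j - 1))
    / ((Nat.factorial (n - 1)) : ℝ) ^ 2

/-!
Write `m_j = massVal n j α` and `u_j = √m_j`. The masses satisfy the two-term recurrence
`(2n - k - 1) m_{k+1} = k m_k` for `1 ≤ k ≤ n - 2`, and `(n - 1) m_{n-1} = 2n m_n` at the end.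
Since the squared off-diagonal entries are `k (2n - k - 1) / 4` (and `n (n - 1) / 2` for the last
one), this gives `offA k · u_{k+1} = (k / 2) u_k`, and `offA k · u_k = ((2n - k - 1) / 2) u_{k+1}`
for `k ≤ n - 2` but `offA (n - 1) · u_{n-1} = n u_n`, which cancels the last row. In an interior
row `j = k + 1` the two neighbours thus contribute `(2n - k - 1)/2 + (k + 1)/2 = n` times `u_j`,
cancelling the diagonal; in the first row only `(n - 1/2) u_1 = k_1 / u_1` survives.
-/

open Matrix Finset

lemma offA_zero (n : ℕ) : offA n 0 = 0 := by
  rcases Nat.lt_or_ge n 2 with h | h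
  · interval_cases n <;> simp [offA]
  · simp [offA, show 0 ≠ n - 1 by omega]

-- `v` is indexed from `0` and `offA` from `1`; row `0` needs no special case since `offA n 0 = 0`.
lemma Bmat_mulVec_apply (n : ℕ) (v : ℕ → ℝ) (j : Fin n) :
    (Bmat n *ᵥ fun i => v i) j =
      n * v j - offA n j * v (j - 1) -
        if (j : ℕ) + 1 = n then 0 else offA n (j + 1) * v (j + 1) := by
  obtain ⟨k, hk⟩ := j
  rw [mulVec, dotProduct]
  simp only [Bmat, of_apply]
  rw [Fin.sum_univ_eq_sum_range (fun i => (if k = i then (n : ℝ)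
    else if k + 1 = i then -offA n (k + 1)
    else if i + 1 = k then -offA n (i + 1) else 0) * v i)]
  have hsplit : ∀ i, (if k = i then (n : ℝ) else if k + 1 = i then -offA n (k + 1)
      else if i + 1 = k then -offA n (i + 1) else 0) * v i =
      (if k = i then n * v k else 0) + (if k - 1 = i then -(offA n k * v (k - 1)) else 0)
        + (if k + 1 = i then -(offA n (k + 1) * v (k + 1)) else 0) := by
    intro i
    split_ifs <;> (try subst i) <;> first | omega | simp
    · obtain rfl : k = 0 := by omega
      simp [offA_zero]
    · simp_all
  simp only [hsplit, sum_add_distrib, sum_ite_eq, mem_range, hk, show k - 1 < n by omega]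
  split_ifs <;> first | omega | ring

lemma massVal_nonneg (n j : ℕ) (α : ℝ) : 0 ≤ massVal n j α := by
  unfold massVal
  split_ifs <;> positivity

lemma massVal_succ_recurrence {n k : ℕ} (α : ℝ) (hk : 1 ≤ k) (hkn : k + 1 < n) :
    (2 * n - k - 1 : ℝ) * massVal n (k + 1) α = k * massVal n k α := by
  obtain ⟨j, rfl⟩ : ∃ j, k = j + 1 := ⟨k - 1, by omega⟩
  obtain ⟨a, ha⟩ : ∃ a, 2 * n = a + j + 4 := ⟨2 * n - j - 4, by omega⟩
  have hn : (2 * n : ℝ) = a + j + 4 := by exact_mod_cast ha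
  rw [massVal, massVal, if_neg (by omega), if_neg (by omega),
    show 2 * n - (j + 1 + 1) - 1 = a + 1 by omega, show 2 * n - (j + 1) - 1 = a + 2 by omega,
    show j + 1 + 1 - 1 = j + 1 by omega, show j + 1 - 1 = j by omega]
  push_cast [Nat.factorial_succ, hn]
  ring

lemma massVal_last_recurrence {n : ℕ} (α : ℝ) (hn : 2 ≤ n) :
    (n - 1 : ℝ) * massVal n (n - 1) α = 2 * n * massVal n n α := by
  obtain ⟨m, rfl⟩ : ∃ m, n = m + 2 := ⟨n - 2, by omega⟩
  have hf : ((m + 1).factorial : ℝ) ≠ 0 := by positivity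
  rw [massVal, massVal, if_neg (by omega), if_pos rfl,
    show 2 * (m + 2) - (m + 2 - 1) - 1 = m + 2 by omega, show m + 2 - 1 - 1 = m by omega,
    show m + 2 - 1 = m + 1 by omega]
  field_simp
  push_cast [Nat.factorial_succ]
  ring

lemma massVal_one_mul {n : ℕ} (α : ℝ) (hn : 2 ≤ n) :
    (n - 1 / 2 : ℝ) * massVal n 1 α =
      α ^ 2 * (2 * n - 1).factorial / ((n - 1).factorial : ℝ) ^ 2 := by
  obtain ⟨m, rfl⟩ : ∃ m, n = m + 2 := ⟨n - 2, by omega⟩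
  rw [massVal, if_neg (by omega), show 2 * (m + 2) - 1 - 1 = 2 * m + 2 by omega,
    show 2 * (m + 2) - 1 = 2 * m + 2 + 1 by omega]
  push_cast [Nat.factorial_succ]
  ring

lemma sqrt_mul_sqrt_eq_mul_sqrt {c x y b : ℝ} (hx : 0 ≤ x) (hb : 0 ≤ b)
    (h : c * x = b ^ 2 * y) : √c * √x = b * √y := by
  rw [← Real.sqrt_mul' c hx, h, Real.sqrt_mul (sq_nonneg b), Real.sqrt_sq hb]

lemma offA_mul_sqrt_massVal_succ {n k : ℕ} (α : ℝ) (hk : 1 ≤ k) (hkn : k < n) :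
    offA n k * √(massVal n (k + 1) α) = k / 2 * √(massVal n k α) := by
  by_cases hlast : k = n - 1
  · obtain rfl : n = k + 1 := by omega
    rw [offA, if_pos hlast]
    refine sqrt_mul_sqrt_eq_mul_sqrt (massVal_nonneg ..) (by positivity) ?_
    have := massVal_last_recurrence (n := k + 1) α (by omega)
    simp only [Nat.add_sub_cancel] at this
    push_cast at this ⊢
    linear_combination -((k : ℝ) / 4) * this
  · rw [offA, if_neg hlast, mul_assoc,
      sqrt_mul_sqrt_eq_mul_sqrt (b := k) (massVal_nonneg ..) (by positivity) ?_]
    · ring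
    · linear_combination (k : ℝ) * massVal_succ_recurrence (n := n) α hk (by omega)

lemma offA_mul_sqrt_massVal {n k : ℕ} (α : ℝ) (hk : 1 ≤ k) (hkn : k + 1 < n) :
    offA n k * √(massVal n k α) = (2 * n - k - 1) / 2 * √(massVal n (k + 1) α) := by
  have hb : (0 : ℝ) ≤ 2 * n - k - 1 := by
    have : (k + 1 : ℝ) < n := by exact_mod_cast hkn
    linarith
  rw [offA, if_neg (by omega), mul_assoc,
    sqrt_mul_sqrt_eq_mul_sqrt (massVal_nonneg ..) hb ?_]
  · ring
  · linear_combination -(2 * n - k - 1 : ℝ) * massVal_succ_recurrence α hk hkn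

lemma offA_pred_mul_sqrt_massVal_pred {n : ℕ} (α : ℝ) (hn : 2 ≤ n) :
    offA n (n - 1) * √(massVal n (n - 1) α) = n * √(massVal n n α) := by
  rw [offA, if_pos rfl]
  refine sqrt_mul_sqrt_eq_mul_sqrt (massVal_nonneg ..) (by positivity) ?_
  linear_combination (n : ℝ) / 2 * massVal_last_recurrence α hn

theorem stmt_16_general (n : ℕ) (hn : 2 ≤ n) (α : ℝ) :
    (Bmat n).mulVec (fun j => Real.sqrt (massVal n ((j : ℕ) + 1) α)) =
      fun (j : Fin n) => if (j : ℕ) = 0 then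
          (α ^ 2 * (Nat.factorial (2 * n - 1)) / ((Nat.factorial (n - 1)) : ℝ) ^ 2)
            / Real.sqrt (massVal n 1 α)
        else 0 := by
  funext j
  refine (Bmat_mulVec_apply n (fun k => √(massVal n (k + 1) α)) j).trans ?_
  obtain ⟨k, hk⟩ := j
  simp only
  rcases Nat.eq_zero_or_pos k with rfl | hkpos
  · rw [if_neg (show 0 + 1 ≠ n by omega), if_pos rfl, offA_zero,
      offA_mul_sqrt_massVal_succ α le_rfl (by omega), ← massVal_one_mul α hn,
      mul_div_assoc, Real.div_sqrt]
    simp only [zero_add, zero_mul, sub_zero, Nat.cast_one]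
    ring
  · rw [if_neg (show k ≠ 0 by omega), Nat.sub_add_cancel hkpos]
    by_cases hlast : k + 1 = n
    · obtain rfl : k = n - 1 := by omega
      rw [if_pos hlast, hlast, offA_pred_mul_sqrt_massVal_pred α hn]
      ring
    · rw [if_neg hlast, offA_mul_sqrt_massVal α hkpos (by omega),
        offA_mul_sqrt_massVal_succ α (by omega) (by omega)]
      push_cast
      ring

theorem stmt_16 (n : ℕ) (hn : 2 ≤ n) (α : ℝ) (hα : 0 < α) :
    (Bmat n).mulVec (fun j => Real.sqrt (massVal n ((j : ℕ) + 1) α)) =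
      fun (j : Fin n) => if (j : ℕ) = 0 then
          (α ^ 2 * (Nat.factorial (2 * n - 1)) / ((Nat.factorial (n - 1)) : ℝ) ^ 2)
            / Real.sqrt (massVal n 1 α)
        else 0 :=
  stmt_16_general n hn α
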